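/- Let $0 < p < 1$ and define $g_p(\alpha) = 2\, \frac{\alpha^{\alpha}}{(\alpha-1)^{\alpha-1}}\, p^{\alpha-1}(1-p) - 1$ for $\alpha > 1$. Then $g_p$ attains its maximum on $(1, \infty)$ at $\alpha_{\max} = \frac{1}{1-p}$, where $g_p(\alpha_{\max}) = 1$; moreover $g_p$ is strictly decreasing on $(\frac{1}{1-p}, \infty)$ and $\lim_{\alpha \to \infty} g_p(\alpha) = -1$. -/

import Mathlib

/-!
Writing `g_p = exp h_p - 1` with `h_p(α) = log 2 + α log α - (α-1) log (α-1) + (α-1) log p + log (1-p)`,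
one has `h_p'(α) = log (α p / (α - 1))`, which is positive for `α < 1/(1-p)` and negative beyond,
and `h_p(1/(1-p)) = log 2`. At infinity `h_p(α) ≤ C + log α + α log p → -∞` since `log p < 0`.
-/

/-- `g_p(α) = 2 α^α / (α-1)^(α-1) · p^(α-1) (1-p) - 1`, with real powers. -/
noncomputable def gfun (p α : ℝ) : ℝ :=
  2 * (α ^ α / (α - 1) ^ (α - 1)) * p ^ (α - 1) * (1 - p) - 1

open Real Filter Set

noncomputable def logOneAddGfun (p α : ℝ) : ℝ :=
  log 2 + α * log α - (α - 1) * log (α - 1) + (α - 1) * log p + log (1 - p)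

lemma gfun_eq_exp_sub_one {p α : ℝ} (hp : 0 < p) (hp1 : p < 1) (hα : 1 < α) :
    gfun p α = exp (logOneAddGfun p α) - 1 := by
  have hq : 0 < 1 - p := by linarith
  rw [gfun, logOneAddGfun, rpow_def_of_pos (by linarith), rpow_def_of_pos (by linarith),
    rpow_def_of_pos hp, exp_add, exp_add, exp_sub, exp_add, exp_log two_pos, exp_log hq]
  simp only [mul_comm (log _)]
  ring

lemma eqOn_gfun {p : ℝ} (hp : 0 < p) (hp1 : p < 1) :
    EqOn (gfun p) (fun α => exp (logOneAddGfun p α) - 1) (Ioi 1) :=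
  fun _ hα => gfun_eq_exp_sub_one hp hp1 hα

lemma hasDerivAt_logOneAddGfun (p : ℝ) {α : ℝ} (hα : 1 < α) :
    HasDerivAt (logOneAddGfun p) (log p + log α - log (α - 1)) α := by
  have hsub : HasDerivAt (fun x : ℝ => x - 1) 1 α := (hasDerivAt_id α).sub_const 1
  have hmul_log : HasDerivAt (fun x : ℝ => (x - 1) * log (x - 1)) ((log (α - 1) + 1) * 1) α :=
    HasDerivAt.comp (h₂ := fun y => y * log y) α (hasDerivAt_mul_log (by linarith)) hsub
  have := ((((hasDerivAt_const α (log 2)).add (hasDerivAt_mul_log (by linarith : α ≠ 0))).sub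
    hmul_log).add (hsub.mul_const (log p))).add (hasDerivAt_const α (log (1 - p)))
  exact this.congr_deriv (by ring)

lemma logOneAddGfun_one_div_one_sub {p : ℝ} (hp : 0 < p) (hp1 : p < 1) :
    logOneAddGfun p (1 / (1 - p)) = log 2 := by
  have hq : 0 < 1 - p := by linarith
  have hsub : 1 / (1 - p) - 1 = p / (1 - p) := by field_simp; ring
  rw [logOneAddGfun, hsub, one_div, log_inv, log_div hp.ne' hq.ne']
  field_simp
  ring

lemma one_lt_one_div_one_sub {p : ℝ} (hp : 0 < p) (hp1 : p < 1) : 1 < 1 / (1 - p) := by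
  rw [lt_div_iff₀ (by linarith)]
  linarith

lemma log_add_log_sub_log_sub_one_pos {p x : ℝ} (hp : 0 < p) (hp1 : p < 1) (hx : 1 < x)
    (hxp : x < 1 / (1 - p)) : 0 < log p + log x - log (x - 1) := by
  rw [lt_div_iff₀ (by linarith)] at hxp
  have := log_lt_log (by linarith) (by nlinarith : x - 1 < p * x)
  rw [log_mul hp.ne' (by linarith)] at this
  linarith

lemma log_add_log_sub_log_sub_one_neg {p x : ℝ} (hp : 0 < p) (hp1 : p < 1)
    (hxp : 1 / (1 - p) < x) : log p + log x - log (x - 1) < 0 := by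
  have hx : 1 < x := (one_lt_one_div_one_sub hp hp1).trans hxp
  rw [div_lt_iff₀ (by linarith)] at hxp
  have := log_lt_log (by positivity) (by nlinarith : p * x < x - 1)
  rw [log_mul hp.ne' (by linarith)] at this
  linarith

lemma strictMonoOn_logOneAddGfun {p : ℝ} (hp : 0 < p) (hp1 : p < 1) :
    StrictMonoOn (logOneAddGfun p) (Ioc 1 (1 / (1 - p))) := by
  refine strictMonoOn_of_deriv_pos (convex_Ioc _ _)
    (fun x hx => (hasDerivAt_logOneAddGfun p hx.1).continuousAt.continuousWithinAt) ?_
  intro x hx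
  rw [interior_Ioc] at hx
  rw [(hasDerivAt_logOneAddGfun p hx.1).deriv]
  exact log_add_log_sub_log_sub_one_pos hp hp1 hx.1 hx.2

lemma strictAntiOn_logOneAddGfun {p : ℝ} (hp : 0 < p) (hp1 : p < 1) :
    StrictAntiOn (logOneAddGfun p) (Ici (1 / (1 - p))) := by
  have hgt : ∀ x ∈ Ici (1 / (1 - p)), 1 < x := fun x hx =>
    (one_lt_one_div_one_sub hp hp1).trans_le hx
  refine strictAntiOn_of_deriv_neg (convex_Ici _)
    (fun x hx => (hasDerivAt_logOneAddGfun p (hgt x hx)).continuousAt.continuousWithinAt) ?_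
  intro x hx
  rw [interior_Ici] at hx
  rw [(hasDerivAt_logOneAddGfun p (hgt x (Ioi_subset_Ici_self hx))).deriv]
  exact log_add_log_sub_log_sub_one_neg hp hp1 hx

lemma logOneAddGfun_le_log_two {p α : ℝ} (hp : 0 < p) (hp1 : p < 1) (hα : 1 < α) :
    logOneAddGfun p α ≤ log 2 := by
  have hmax := one_lt_one_div_one_sub hp hp1
  rw [← logOneAddGfun_one_div_one_sub hp hp1]
  rcases le_total α (1 / (1 - p)) with hle | hge
  · exact (strictMonoOn_logOneAddGfun hp hp1).monotoneOn ⟨hα, hle⟩ ⟨hmax, le_rfl⟩ hle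
  · exact (strictAntiOn_logOneAddGfun hp hp1).antitoneOn self_mem_Ici hge hge

lemma mul_log_sub_mul_log_sub_one_le {α : ℝ} (hα : 1 < α) :
    α * log α - (α - 1) * log (α - 1) ≤ log α + 1 := by
  have h1 : 0 < α - 1 := by linarith
  have hlog := log_le_sub_one_of_pos (div_pos (by linarith) h1 : 0 < α / (α - 1))
  rw [log_div (by linarith) h1.ne'] at hlog
  have hratio : (α - 1) * (α / (α - 1) - 1) = 1 := by field_simp; ring
  nlinarith [mul_le_mul_of_nonneg_left hlog h1.le]

lemma tendsto_log_add_mul_atTop_atBot {c : ℝ} (hc : c < 0) :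
    Tendsto (fun x => log x + c * x) atTop atBot := by
  have hdiv : Tendsto (fun x => log x / x + c) atTop (nhds (0 + c)) :=
    isLittleO_log_id_atTop.tendsto_div_nhds_zero.add_const c
  refine (tendsto_id.atTop_mul_neg (by simpa using hc) hdiv).congr' ?_
  filter_upwards [eventually_gt_atTop 0] with x hx
  simp only [id]
  field_simp

lemma tendsto_logOneAddGfun_atTop {p : ℝ} (hp : 0 < p) (hp1 : p < 1) :
    Tendsto (logOneAddGfun p) atTop atBot := by
  have hbound : ∀ᶠ α in atTop,
      logOneAddGfun p α ≤ (log 2 + log (1 - p) + 1 - log p) + (log α + log p * α) := by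
    filter_upwards [eventually_gt_atTop 1] with α hα
    have := mul_log_sub_mul_log_sub_one_le hα
    rw [logOneAddGfun]
    linarith
  exact tendsto_atBot_mono' atTop hbound
    (tendsto_atBot_add_const_left _ _ (tendsto_log_add_mul_atTop_atBot (log_neg hp hp1)))

/-- `g_p` attains its maximum on `(1,∞)` at `1/(1-p)` with value `1`, is strictly
decreasing on `(1/(1-p), ∞)`, and tends to `-1` at infinity. -/
theorem claim_gfun_shape (p : ℝ) (hp : 0 < p) (hp1 : p < 1) :
    (∀ α ∈ Set.Ioi (1 : ℝ), gfun p α ≤ gfun p (1 / (1 - p))) ∧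
    gfun p (1 / (1 - p)) = 1 ∧
    StrictAntiOn (gfun p) (Set.Ioi (1 / (1 - p))) ∧
    Filter.Tendsto (gfun p) Filter.atTop (nhds (-1)) := by
  have hmax := one_lt_one_div_one_sub hp hp1
  have hval : gfun p (1 / (1 - p)) = 1 := by
    rw [gfun_eq_exp_sub_one hp hp1 hmax, logOneAddGfun_one_div_one_sub hp hp1, exp_log two_pos]
    norm_num
  have hexp_sub_one : StrictMono (fun t => exp t - 1) := fun _ _ h => by simpa using h
  refine ⟨fun α hα => ?_, hval, ?_, ?_⟩
  · calc gfun p α = exp (logOneAddGfun p α) - 1 := gfun_eq_exp_sub_one hp hp1 hα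
      _ ≤ exp (log 2) - 1 := by gcongr; exact logOneAddGfun_le_log_two hp hp1 hα
      _ = gfun p (1 / (1 - p)) := by rw [hval, exp_log two_pos]; norm_num
  · refine (hexp_sub_one.comp_strictAntiOn
      ((strictAntiOn_logOneAddGfun hp hp1).mono Ioi_subset_Ici_self)).congr ?_
    exact ((eqOn_gfun hp hp1).mono fun x hx => hmax.trans hx).symm
  · have := (tendsto_exp_atBot.comp (tendsto_logOneAddGfun_atTop hp hp1)).sub_const 1
    rw [zero_sub] at this
    exact this.congr' ((eqOn_gfun hp hp1).eventuallyEq_of_mem (Ioi_mem_atTop 1)).symm
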